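/- Let p : Fin n → ℝ² be a clockwise enumeration of a set P in convex position, and let i', i, j, j' ∈ Fin n occur in this clockwise cyclic order, i.e., δ(i',i) ≤ δ(i',j) ≤ δ(i',j'). Then for every integer k ≥ 0, cost_k(i,j) ≤ cost_k(i',j'). -/

import Mathlib

open Set Metric

noncomputable abbrev Pt := EuclideanSpace ℝ (Fin 2)

/-- The planar determinant `det(u,v) = u₁·v₂ − u₂·v₁`. -/
def detv (u v : Pt) : ℝ := u 0 * v 1 - u 1 * v 0

/- ### determinant algebra -/

lemma detv_cyclic (a b c : Pt) : detv (b - a) (c - a) = detv (c - b) (a - b) := by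
  simp only [detv, PiLp.sub_apply]; ring

lemma detv_add_right (c a b : Pt) : detv c (a + b) = detv c a + detv c b := by
  simp only [detv, PiLp.add_apply]; ring

lemma detv_sub_right (c a b : Pt) : detv c (a - b) = detv c a - detv c b := by
  simp only [detv, PiLp.sub_apply]; ring

lemma detv_smul_right (c : Pt) (t : ℝ) (a : Pt) : detv c (t • a) = t * detv c a := by
  simp only [detv, PiLp.smul_apply, smul_eq_mul]; ring

lemma detv_linear (c : Pt) : IsLinearMap ℝ (detv c) :=
  ⟨detv_add_right c, fun t a => detv_smul_right c t a⟩

lemma hull_le_halfplane {c : Pt} {s : Set Pt} {r : ℝ} (h : ∀ x ∈ s, detv c x ≤ r) :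
    ∀ x ∈ convexHull ℝ s, detv c x ≤ r :=
  fun _ hx => convexHull_min h (convex_halfSpace_le (detv_linear c) r) hx

lemma hull_ge_halfplane {c : Pt} {s : Set Pt} {r : ℝ} (h : ∀ x ∈ s, r ≤ detv c x) :
    ∀ x ∈ convexHull ℝ s, r ≤ detv c x :=
  fun _ hx => convexHull_min h (convex_halfSpace_ge (detv_linear c) r) hx

lemma hull_lt_halfplane {c : Pt} {s : Set Pt} {r : ℝ} (h : ∀ x ∈ s, detv c x < r) :
    ∀ x ∈ convexHull ℝ s, detv c x < r :=
  fun _ hx => convexHull_min h (convex_halfSpace_lt (detv_linear c) r) hx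

lemma detv_eq_zero_imp {u v : Pt} (hu : u ≠ 0) (h : detv u v = 0) : ∃ t : ℝ, v = t • u := by
  have hcases : u 0 ≠ 0 ∨ u 1 ≠ 0 := by
    by_contra hc
    push_neg at hc
    apply hu
    ext i
    fin_cases i
    · exact hc.1
    · exact hc.2
  have hdet : u 0 * v 1 = u 1 * v 0 := by
    simp only [detv] at h; linarith
  rcases hcases with h0 | h1
  · refine ⟨v 0 / u 0, PiLp.ext fun i => ?_⟩
    fin_cases i <;> simp only [Fin.zero_eta, Fin.mk_one, PiLp.smul_apply, smul_eq_mul] <;> field_simp <;> linarith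
  · refine ⟨v 1 / u 1, PiLp.ext fun i => ?_⟩
    have hv0 : u 1 * v 0 = u 1 * (v 1 / u 1 * u 0) := by field_simp; linarith
    fin_cases i <;> simp only [Fin.zero_eta, Fin.mk_one, PiLp.smul_apply, smul_eq_mul]
    · field_simp at hv0 ⊢; linarith
    · field_simp
/- ### Fin arithmetic -/

lemma fin_sub_val {n : ℕ} (x y : Fin n) :
    (x - y).val = if y.val ≤ x.val then x.val - y.val else x.val + n - y.val := by
  have hx := x.isLt
  have hy := y.isLt
  rw [Fin.sub_def]
  simp only
  split
  · have h1 : n - y.val + x.val = (x.val - y.val) + n := by omega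
    rw [h1, Nat.add_mod_right]
    exact Nat.mod_eq_of_lt (by omega)
  · rw [Nat.mod_eq_of_lt (by omega)]
    omega

lemma fin_sub_val_of_le {n : ℕ} {x y : Fin n} (h : y ≤ x) : (x - y).val = x.val - y.val := by
  rw [fin_sub_val, if_pos (Fin.le_def.1 h)]

lemma fin_sub_val_of_gt {n : ℕ} {x y : Fin n} (h : x < y) : (x - y).val = x.val + n - y.val := by
  rw [fin_sub_val, if_neg (by exact Nat.not_le.2 (Fin.lt_def.1 h))]

/- ### cyclic convex position -/

lemma cyc {n : ℕ} (p : Fin n → Pt)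
    (hcw : ∀ i j l : Fin n, i < j → j < l → detv (p j - p i) (p l - p i) < 0)
    {x y z : Fin n} (h1 : 0 < (y - x).val) (h2 : (y - x).val < (z - x).val) :
    detv (p y - p x) (p z - p x) < 0 := by
  have hx := x.isLt
  have hy := y.isLt
  have hz := z.isLt
  rw [fin_sub_val] at h1 h2
  rw [fin_sub_val] at h2
  have hcase : (x.val < y.val ∧ y.val < z.val) ∨ (y.val < z.val ∧ z.val < x.val) ∨
      (z.val < x.val ∧ x.val < y.val) := by
    split_ifs at h1 h2 <;> omega
  rcases hcase with ⟨h, h'⟩ | ⟨h, h'⟩ | ⟨h, h'⟩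
  · exact hcw x y z (Fin.lt_def.2 h) (Fin.lt_def.2 h')
  · have := hcw y z x (Fin.lt_def.2 h) (Fin.lt_def.2 h')
    rwa [detv_cyclic]
  · have := hcw z x y (Fin.lt_def.2 h) (Fin.lt_def.2 h')
    rwa [detv_cyclic, detv_cyclic]

/-- Every other vertex lies strictly on the negative side of the supporting line
through `p m` in direction `p (m+1) - p (m-1)`. -/
lemma exposed {n : ℕ} [NeZero n] (p : Fin n → Pt)
    (hcw : ∀ i j l : Fin n, i < j → j < l → detv (p j - p i) (p l - p i) < 0)
    (hn : 3 ≤ n) (m w : Fin n) (hw : w ≠ m) :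
    detv (p (m + 1) - p (m - 1)) (p w - p m) < 0 := by
  set u := m - 1 with hu
  have h1v : ((1 : Fin n)).val = 1 := by rw [Fin.val_one']; exact Nat.mod_eq_of_lt (by omega)
  have h2v : ((2 : Fin n)).val = 2 := by
    have h2 : (2 : Fin n) = 1 + 1 := by rw [Fin.ext_iff, Fin.val_add, h1v]; rfl
    rw [h2, Fin.val_add_eq_of_add_lt (by rw [h1v]; omega), h1v]
  have hmu : m - u = 1 := by rw [hu]; abel
  have hm1u : (m + 1) - u = 2 := by
    rw [hu, show (2 : Fin n) = 1 + 1 by rw [Fin.ext_iff, Fin.val_add, h1v]; rfl]; abel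
  have hA : detv (p m - p u) (p (m + 1) - p u) < 0 := by
    apply cyc p hcw
    · rw [hmu, h1v]; omega
    · rw [hmu, hm1u, h1v, h2v]; omega
  by_cases hwu : w = u
  · have hkey : detv (p (m + 1) - p u) (p w - p m) = detv (p m - p u) (p (m + 1) - p u) := by
      rw [hwu]; simp only [detv, PiLp.sub_apply]; ring
    rw [hkey]; exact hA
  by_cases hwm1 : w = m + 1
  · rw [hwm1]
    have hkey : detv (p (m + 1) - p u) (p (m + 1) - p m) =
        detv (p m - p u) (p (m + 1) - p u) := by
      simp only [detv, PiLp.sub_apply]; ring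
    rw [hkey]; exact hA
  · have hne0 : w - u ≠ 0 := sub_ne_zero.2 hwu
    have hne1 : w - u ≠ 1 := by
      intro h
      apply hw
      have : w = 1 + u := by rw [← h]; abel
      rw [this, hu]; abel
    have hne2 : w - u ≠ 2 := by
      intro h
      apply hwm1
      have : w = 2 + u := by rw [← h]; abel
      rw [this, hu, show (2 : Fin n) = 1 + 1 by rw [Fin.ext_iff, Fin.val_add, h1v]; rfl]; abel
    have hval : 2 < (w - u).val := by
      have e0 : (w - u).val ≠ 0 := fun h => hne0 (Fin.ext (by rw [h, Fin.val_zero]))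
      have e1 : (w - u).val ≠ 1 := fun h => hne1 (Fin.ext (by rw [h, h1v]))
      have e2 : (w - u).val ≠ 2 := fun h => hne2 (Fin.ext (by rw [h, h2v]))
      omega
    have hB : detv (p (m + 1) - p u) (p w - p u) < 0 := by
      apply cyc p hcw
      · rw [hm1u, h2v]; omega
      · rw [hm1u, h2v]; omega
    have hkey : detv (p (m + 1) - p u) (p w - p m) =
        detv (p (m + 1) - p u) (p w - p u) + detv (p m - p u) (p (m + 1) - p u) := by
      simp only [detv, PiLp.sub_apply]; ring
    rw [hkey]
    linarith
/- ### the chord lemma : points of the hull on the line through `p i`, `p j`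
lie on the segment between them -/

lemma hull_line {n : ℕ} [NeZero n] (p : Fin n → Pt) (hinj : Function.Injective p)
    (hcw : ∀ i j l : Fin n, i < j → j < l → detv (p j - p i) (p l - p i) < 0)
    {i j : Fin n} (hij : i ≠ j) {x : Pt}
    (hx : x ∈ convexHull ℝ (Set.range p)) (hfx : detv (p j - p i) (x - p i) = 0) :
    x ∈ segment ℝ (p i) (p j) := by
  have hne2 : 2 ≤ n := by
    rcases Nat.lt_or_ge n 2 with h | h
    · exfalso
      have hi := i.isLt
      have hj := j.isLt
      exact hij (Fin.ext (by omega))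
    · exact h
  by_cases hn3 : 3 ≤ n
  · -- the main case
    have hpij : p j - p i ≠ 0 := sub_ne_zero.2 fun h => hij (hinj h).symm
    obtain ⟨t, ht⟩ := detv_eq_zero_imp hpij hfx
    -- supporting line at i
    have hti : 0 ≤ t := by
      set ci := p (i + 1) - p (i - 1) with hci
      have hhalf : ∀ y ∈ convexHull ℝ (Set.range p), detv ci y ≤ detv ci (p i) := by
        apply hull_le_halfplane
        rintro _ ⟨w, rfl⟩
        by_cases hwi : w = i
        · rw [hwi]
        · have := exposed p hcw hn3 i w hwi
          rw [← hci, detv_sub_right] at this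
          linarith
      have h1 : detv ci (x - p i) ≤ 0 := by
        have := hhalf x hx
        rw [detv_sub_right]; linarith
      rw [ht, detv_smul_right] at h1
      have h2 : detv ci (p j - p i) < 0 := exposed p hcw hn3 i j (Ne.symm hij)
      nlinarith
    have htj : t ≤ 1 := by
      set cj := p (j + 1) - p (j - 1) with hcj
      have hhalf : ∀ y ∈ convexHull ℝ (Set.range p), detv cj y ≤ detv cj (p j) := by
        apply hull_le_halfplane
        rintro _ ⟨w, rfl⟩
        by_cases hwj : w = j
        · rw [hwj]
        · have := exposed p hcw hn3 j w hwj
          rw [← hcj, detv_sub_right] at this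
          linarith
      have h1 : detv cj (x - p j) ≤ 0 := by
        have := hhalf x hx
        rw [detv_sub_right]; linarith
      have ht' : x - p j = (t - 1) • (p j - p i) := by
        rw [sub_smul, one_smul, ← ht]; abel
      rw [ht', detv_smul_right] at h1
      have h2 : detv cj (p i - p j) < 0 := exposed p hcw hn3 j i hij
      have h3 : 0 < detv cj (p j - p i) := by
        have : detv cj (p j - p i) = -(detv cj (p i - p j)) := by
          rw [detv_sub_right, detv_sub_right]; ring
        rw [this]; linarith
      nlinarith
    have hx2 : x = (1 - t) • p i + t • p j := by
      have : x - p i = t • (p j - p i) := ht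
      rw [smul_sub] at this
      rw [sub_smul, one_smul]
      have := sub_eq_iff_eq_add.1 this
      rw [this]; abel
    rw [segment_eq_image]
    exact ⟨t, ⟨hti, htj⟩, hx2.symm⟩
  · -- n = 2
    have hn2 : n = 2 := by omega
    have hall : ∀ w : Fin n, w = i ∨ w = j := by
      intro w
      have hw := w.isLt
      have hi := i.isLt
      have hj := j.isLt
      have hne : i.val ≠ j.val := fun h => hij (Fin.ext h)
      rcases Nat.lt_or_ge w.val 1 with h | h
      · rcases Nat.lt_or_ge i.val 1 with h' | h'
        · exact Or.inl (Fin.ext (by omega))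
        · exact Or.inr (Fin.ext (by omega))
      · rcases Nat.lt_or_ge i.val 1 with h' | h'
        · exact Or.inr (Fin.ext (by omega))
        · exact Or.inl (Fin.ext (by omega))
    have hsub : Set.range p ⊆ {p i, p j} := by
      rintro _ ⟨w, rfl⟩
      rcases hall w with rfl | rfl
      · exact Or.inl rfl
      · exact Or.inr rfl
    have := convexHull_mono hsub hx
    rwa [convexHull_pair] at this

/- ### sign of points of the arc -/

lemma arc_sign {n : ℕ} [NeZero n] (p : Fin n → Pt)
    (hcw : ∀ i j l : Fin n, i < j → j < l → detv (p j - p i) (p l - p i) < 0)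
    {i j v : Fin n} (hij : i ≠ j) (hv : v - i ≤ j - i) :
    0 ≤ detv (p j - p i) (p v - p i) := by
  by_cases hvi : v = i
  · rw [hvi, sub_self]
    simp [detv]
  by_cases hvj : v = j
  · rw [hvj]
    simp only [detv, PiLp.sub_apply]
    ring_nf
    exact le_refl 0
  · have h1 : 0 < (v - i).val := by
      have : v - i ≠ 0 := sub_ne_zero.2 hvi
      have : (v - i).val ≠ 0 := fun h => this (Fin.ext (by rw [h, Fin.val_zero]))
      omega
    have h2 : (v - i).val < (j - i).val := by
      have hle := Fin.le_def.1 hv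
      have : v - i ≠ j - i := fun h => hvj (sub_left_inj.1 h)
      have : (v - i).val ≠ (j - i).val := fun h => this (Fin.ext h)
      omega
    have := cyc p hcw h1 h2
    have hswap : detv (p j - p i) (p v - p i) = -(detv (p v - p i) (p j - p i)) := by
      simp only [detv, PiLp.sub_apply]; ring
    rw [hswap]; linarith

/- ### splitting the hull along a halfplane -/

lemma split_hull (c : Pt) (r : ℝ) {T₁ T₂ C : Set Pt} (hC : Convex ℝ C) (hTC : T₁ ⊆ C)
    (hf₁ : ∀ x ∈ T₁, r ≤ detv c x) (hf₂ : ∀ x ∈ T₂, detv c x < r)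
    (hline : ∀ y ∈ convexHull ℝ (T₁ ∪ T₂), detv c y = r → y ∈ C)
    {q : Pt} (hq : q ∈ convexHull ℝ (T₁ ∪ T₂)) (hfq : r ≤ detv c q) : q ∈ C := by
  rcases T₂.eq_empty_or_nonempty with rfl | hT₂
  · rw [Set.union_empty] at hq
    exact convexHull_min hTC hC hq
  rcases T₁.eq_empty_or_nonempty with rfl | hT₁
  · rw [Set.empty_union] at hq
    have := hull_lt_halfplane hf₂ q hq
    linarith
  rw [convexHull_union hT₁ hT₂, mem_convexJoin] at hq
  obtain ⟨u, hu, w, hw, hquw⟩ := hq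
  have hfu : r ≤ detv c u := hull_ge_halfplane hf₁ u hu
  have hfw : detv c w < r := hull_lt_halfplane hf₂ w hw
  obtain ⟨a, b, ha, hb, hab, hqe⟩ := hquw
  have hCu : u ∈ C := convexHull_min hTC hC hu
  have hfq' : r ≤ a * detv c u + b * detv c w := by
    have : detv c (a • u + b • w) = a * detv c u + b * detv c w := by
      rw [detv_add_right, detv_smul_right, detv_smul_right]
    rw [← this, hqe]
    exact hfq
  by_cases hb0 : b = 0
  · have hq2 : q = u := by
      rw [← hqe, hb0]
      have : a = 1 := by linarith
      rw [this]
      simp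
    rw [hq2]; exact hCu
  have hbpos : 0 < b := lt_of_le_of_ne hb (Ne.symm hb0)
  have hDpos : 0 < detv c u - detv c w := by linarith
  set s : ℝ := (detv c u - r) / (detv c u - detv c w) with hs
  have hs0 : 0 ≤ s := div_nonneg (by linarith) hDpos.le
  have hs1 : s ≤ 1 := by rw [hs, div_le_one hDpos]; linarith
  have hspos : 0 < s := by
    rcases lt_or_eq_of_le hs0 with h | h
    · exact h
    · exfalso
      have hur : detv c u = r := by
        have := h.symm
        rw [hs, div_eq_zero_iff] at this
        rcases this with h' | h'
        · linarith
        · linarith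
      have har : a * r + b * r = r := by rw [← add_mul, hab, one_mul]
      rw [hur] at hfq'
      have := mul_lt_mul_of_pos_left hfw hbpos
      linarith
  set rp : Pt := (1 - s) • u + s • w with hrp
  have hfrp : detv c rp = r := by
    rw [hrp, detv_add_right, detv_smul_right, detv_smul_right, hs]
    field_simp
    ring
  have hrpHull : rp ∈ convexHull ℝ (T₁ ∪ T₂) := by
    have hu' : u ∈ convexHull ℝ (T₁ ∪ T₂) := convexHull_mono Set.subset_union_left hu
    have hw' : w ∈ convexHull ℝ (T₁ ∪ T₂) := convexHull_mono Set.subset_union_right hw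
    exact (convex_convexHull ℝ _) hu' hw' (by linarith) hs0 (by ring)
  have hCrp : rp ∈ C := hline rp hrpHull hfrp
  set μ : ℝ := b / s with hμ
  have hμ0 : 0 ≤ μ := div_nonneg hb hs0
  have hμs : μ * s = b := div_mul_cancel₀ b hspos.ne'
  have hμ1 : μ ≤ 1 := by
    rw [hμ, div_le_one hspos]
    rw [hs, le_div_iff₀ hDpos]
    have ha' : a = 1 - b := by linarith
    rw [ha'] at hfq'
    nlinarith [hfq']
  have hqcomb : (1 - μ) • u + μ • rp = q := by
    rw [hrp, smul_add, smul_smul, smul_smul, ← add_assoc, ← add_smul, ← hqe]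
    have e1 : 1 - μ + μ * (1 - s) = a := by
      have : μ * (1 - s) = μ - μ * s := by ring
      rw [this, hμs]
      linarith
    rw [e1, hμs]
  rw [← hqcomb]
  exact hC hCu hCrp (by linarith) hμ0 (by ring)
/-- `costk p k i j` : the minimum, over all clockwise-ordered `k`-tuples
`ℓ 0, …, ℓ (k-1)` of indices lying clockwise between `i` and `j`
(clockwise offsets measured by `Fin` subtraction `(x - i) mod n`),
of the maximum distance from a point `p v` with `v` clockwise between `i` and `j`
to the convex hull of `{p i} ∪ {p (ℓ t)} ∪ {p j}`. -/
noncomputable def costk {n : ℕ} (p : Fin n → Pt) (k : ℕ) (i j : Fin n) : ℝ :=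
  sInf { c : ℝ | ∃ ℓ : Fin k → Fin n,
    Monotone (fun t => ℓ t - i) ∧
    (∀ t, ℓ t - i ≤ j - i) ∧
    c = sSup ((fun v => Metric.infDist (p v)
        (convexHull ℝ (insert (p i) (insert (p j) (p '' Set.range ℓ))))) ''
        {v : Fin n | v - i ≤ j - i}) }

theorem stmt_4 (n : ℕ) (p : Fin n → Pt)
    (hinj : Function.Injective p)
    (hcw : ∀ i j l : Fin n, i < j → j < l → detv (p j - p i) (p l - p i) < 0)
    (i' i j j' : Fin n) (h1 : i - i' ≤ j - i') (h2 : j - i' ≤ j' - i')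
    (k : ℕ) :
    costk p k i j ≤ costk p k i' j' := by
  have hnz : NeZero n := ⟨i.pos.ne'⟩
  classical
  simp only [costk]
  apply le_csInf
  · exact ⟨_, ⟨fun _ => i', fun _ _ _ => le_rfl,
      fun t => by rw [sub_self]; exact Fin.zero_le (j' - i'), rfl⟩⟩
  rintro c' ⟨ℓ', hm', hb', rfl⟩
  -- the clamped tuple
  set a' := i - i' with ha'def
  set b' := j - i' with hb'def
  have hAB : a'.val ≤ b'.val := Fin.le_def.1 h1
  have hBC : b'.val ≤ (j' - i').val := Fin.le_def.1 h2
  set ℓ : Fin k → Fin n :=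
    fun t => if ℓ' t - i' < a' then i else if ℓ' t - i' ≤ b' then ℓ' t else j with hℓ
  have hji : j - i = b' - a' := by rw [ha'def, hb'def, sub_sub_sub_cancel_right]
  have hjival : (j - i).val = b'.val - a'.val := by rw [hji, fin_sub_val_of_le h1]
  have hsub : ∀ w : Fin n, w - i = (w - i') - a' := fun w => by
    rw [ha'def, sub_sub_sub_cancel_right]
  have hval : ∀ t, (ℓ t - i).val =
      min (max (ℓ' t - i').val a'.val) b'.val - a'.val := by
    intro t
    simp only [hℓ]
    split_ifs with hc1 hc2
    · rw [sub_self, Fin.val_zero]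
      have := Fin.lt_def.1 hc1
      omega
    · rw [hsub (ℓ' t), fin_sub_val_of_le (not_lt.1 hc1)]
      have ha := Fin.le_def.1 (not_lt.1 hc1)
      have hb := Fin.le_def.1 hc2
      omega
    · rw [hjival]
      have hb := Fin.lt_def.1 (not_le.1 hc2)
      omega
  have hmono : Monotone fun t => ℓ t - i := by
    intro t s hts
    have hd : (ℓ' t - i').val ≤ (ℓ' s - i').val := Fin.le_def.1 (hm' hts)
    rw [Fin.le_def, hval t, hval s]
    omega
  have hbound : ∀ t, ℓ t - i ≤ j - i := by
    intro t
    rw [Fin.le_def, hval t, hjival]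
    omega
  have himem : i ∈ {v : Fin n | v - i ≤ j - i} := by
    rw [Set.mem_setOf_eq, sub_self]; exact Fin.zero_le (j - i)
  have hbdd : BddBelow { c : ℝ | ∃ m : Fin k → Fin n,
      Monotone (fun t => m t - i) ∧
      (∀ t, m t - i ≤ j - i) ∧
      c = sSup ((fun v => Metric.infDist (p v)
          (convexHull ℝ (insert (p i) (insert (p j) (p '' Set.range m))))) ''
          {v : Fin n | v - i ≤ j - i}) } := by
    refine ⟨0, ?_⟩
    rintro c ⟨m, hmm, hbb, rfl⟩
    exact le_trans Metric.infDist_nonneg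
      (le_csSup (((Set.toFinite _).image _).bddAbove) (Set.mem_image_of_mem _ himem))
  refine le_trans (csInf_le hbdd ⟨ℓ, hmono, hbound, rfl⟩) ?_
  -- now compare the suprema
  set S : Set Pt := insert (p i) (insert (p j) (p '' Set.range ℓ)) with hS
  set S' : Set Pt := insert (p i') (insert (p j') (p '' Set.range ℓ')) with hS'
  apply csSup_le
  · exact ⟨_, Set.mem_image_of_mem _ himem⟩
  rintro r ⟨v, hv, rfl⟩
  rw [Set.mem_setOf_eq] at hv
  beta_reduce
  -- v also lies on the big arc
  have hv' : v - i' ≤ j' - i' := by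
    have hvval := Fin.le_def.1 hv
    rw [hjival] at hvval
    have hco : v - i' = (v - i) + a' := by rw [hsub v, sub_add_cancel]
    have hvv : (v - i').val = (v - i).val + a'.val := by
      rw [hco]
      exact Fin.val_add_eq_of_add_lt (by have := b'.isLt; omega)
    rw [Fin.le_def, hvv]
    omega
  refine le_trans ?_ (le_csSup (((Set.toFinite _).image _).bddAbove)
    (Set.mem_image_of_mem _ hv'))
  -- now the geometric claim
  by_cases hij : i = j
  · have hvi : v = i := by
      have h0 : (j - i).val = 0 := by rw [← hij, sub_self, Fin.val_zero]
      have := Fin.le_def.1 hv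
      have : (v - i).val = 0 := by omega
      have : v - i = 0 := Fin.ext (by rw [this, Fin.val_zero])
      have := sub_eq_zero.1 this
      exact this
    rw [hvi]
    have h0 : Metric.infDist (p i) (convexHull ℝ S) = 0 :=
      Metric.infDist_zero_of_mem (subset_convexHull ℝ S (Set.mem_insert _ _))
    rw [h0]
    exact Metric.infDist_nonneg
  -- main case : i ≠ j
  set cvec : Pt := p j - p i with hcv
  set r0 : ℝ := detv cvec (p i) with hr0
  have hS'sub : S' ⊆ Set.range p := by
    rw [hS']
    intro x hx
    simp only [Set.mem_insert_iff, Set.mem_image, Set.mem_range] at hx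
    rcases hx with rfl | rfl | ⟨_, ⟨t, rfl⟩, rfl⟩ <;> exact Set.mem_range_self _
  have hout : ∀ w : Fin n, (j - i).val < (w - i).val → detv cvec (p w) < r0 := by
    intro w hw
    have hne : j - i ≠ 0 := sub_ne_zero.2 fun h => hij h.symm
    have h0 : 0 < (j - i).val := by
      have : (j - i).val ≠ 0 := fun h => hne (Fin.ext (by rw [h, Fin.val_zero]))
      omega
    have := cyc p hcw h0 hw
    rw [detv_sub_right] at this
    rw [hr0]
    linarith
  have houtval : ∀ w : Fin n, (w - i' < a' ∨ b' < w - i') → (j - i).val < (w - i).val := by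
    intro w hw
    rw [hsub w, hjival]
    rcases hw with hw | hw
    · rw [fin_sub_val_of_gt hw]
      have hwv := Fin.lt_def.1 hw
      have := b'.isLt
      have := a'.isLt
      omega
    · rw [fin_sub_val_of_le (le_trans h1 hw.le)]
      have hwv := Fin.lt_def.1 hw
      omega
  have hgen : ∀ x ∈ S', x ∈ S ∨ detv cvec x < r0 := by
    intro x hx
    rw [hS'] at hx
    simp only [Set.mem_insert_iff, Set.mem_image, Set.mem_range] at hx
    rcases hx with rfl | rfl | ⟨_, ⟨t, rfl⟩, rfl⟩
    · by_cases h : a' = 0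
      · left
        have : i = i' := by
          have := sub_eq_zero.1 (ha'def ▸ h)
          exact this
        rw [← this, hS]
        exact Set.mem_insert _ _
      · right
        apply hout
        apply houtval
        left
        rw [sub_self, Fin.lt_def, Fin.val_zero]
        have : a'.val ≠ 0 := fun hh => h (Fin.ext (by rw [hh, Fin.val_zero]))
        omega
    · by_cases h : b' = j' - i'
      · left
        have : j = j' := by
          have := hb'def.symm.trans h
          exact sub_left_inj.1 this
        rw [← this, hS]
        exact Set.mem_insert_of_mem _ (Set.mem_insert _ _)
      · right
        exact hout _ (houtval _ (Or.inr (lt_of_le_of_ne h2 h)))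
    · by_cases c1 : ℓ' t - i' < a'
      · exact Or.inr (hout _ (houtval _ (Or.inl c1)))
      · by_cases c2 : ℓ' t - i' ≤ b'
        · left
          have hlt : ℓ t = ℓ' t := by
            simp only [hℓ]
            rw [if_neg c1, if_pos c2]
          rw [hS]
          exact Set.mem_insert_of_mem _ (Set.mem_insert_of_mem _
            ⟨ℓ t, Set.mem_range_self t, by rw [hlt]⟩)
        · exact Or.inr (hout _ (houtval _ (Or.inr (not_le.1 c2))))
  set T₁ : Set Pt := {x ∈ S' | r0 ≤ detv cvec x} with hT₁
  set T₂ : Set Pt := {x ∈ S' | detv cvec x < r0} with hT₂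
  have hunion : T₁ ∪ T₂ = S' := by
    rw [hT₁, hT₂]
    ext x
    constructor
    · rintro (hx | hx) <;> exact hx.1
    · intro hx
      rcases le_or_gt r0 (detv cvec x) with h | h
      · exact Or.inl ⟨hx, h⟩
      · exact Or.inr ⟨hx, h⟩
  have hTC : T₁ ⊆ convexHull ℝ S := by
    intro x hx
    rcases hgen x hx.1 with h | h
    · exact subset_convexHull ℝ S h
    · exact absurd hx.2 (not_le.2 h)
  have hT₁f : ∀ x ∈ T₁, r0 ≤ detv cvec x := fun x hx => hx.2
  have hT₂f : ∀ x ∈ T₂, detv cvec x < r0 := fun x hx => hx.2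
  have hline : ∀ y ∈ convexHull ℝ (T₁ ∪ T₂), detv cvec y = r0 → y ∈ convexHull ℝ S := by
    intro y hy hfy
    rw [hunion] at hy
    have hy' : y ∈ convexHull ℝ (Set.range p) := convexHull_mono hS'sub hy
    have hy0 : detv (p j - p i) (y - p i) = 0 := by
      rw [detv_sub_right, ← hcv, hfy, hr0]
      ring
    have hseg := hull_line p hinj hcw hij hy' hy0
    exact segment_subset_convexHull (Set.mem_insert _ _)
      (Set.mem_insert_of_mem _ (Set.mem_insert _ _)) hseg
  have hfv : r0 ≤ detv cvec (p v) := by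
    have := arc_sign p hcw hij hv
    rw [← hcv, detv_sub_right] at this
    rw [hr0]
    linarith
  have hS'ne : (convexHull ℝ S').Nonempty :=
    ⟨p i', subset_convexHull ℝ S' (Set.mem_insert _ _)⟩
  have hpoint : ∀ q ∈ convexHull ℝ S',
      ∃ rr ∈ convexHull ℝ S, dist (p v) rr ≤ dist (p v) q := by
    intro q hq
    rcases le_or_gt r0 (detv cvec q) with hcase | hcase
    · refine ⟨q, ?_, le_rfl⟩
      exact split_hull cvec r0 (convex_convexHull ℝ S) hTC hT₁f hT₂f hline
        (by rwa [hunion]) hcase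
    · set D : ℝ := detv cvec (p v) - detv cvec q with hD
      have hDpos : 0 < D := by rw [hD]; linarith
      set s : ℝ := (detv cvec (p v) - r0) / D with hsdef
      have hs0 : 0 ≤ s := div_nonneg (by linarith) hDpos.le
      have hs1 : s ≤ 1 := by rw [hsdef, div_le_one hDpos, hD]; linarith
      set rr : Pt := (1 - s) • p v + s • q with hrr
      have hfrr : detv cvec rr = r0 := by
        rw [hrr, detv_add_right, detv_smul_right, detv_smul_right, hsdef]
        field_simp
        ring
      have hrrhull : rr ∈ convexHull ℝ (Set.range p) :=
        (convex_convexHull ℝ _) (subset_convexHull ℝ _ (Set.mem_range_self v))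
          (convexHull_mono hS'sub hq) (by linarith) hs0 (by ring)
      have hy0 : detv (p j - p i) (rr - p i) = 0 := by
        rw [detv_sub_right, ← hcv, hfrr, hr0]
        ring
      have hseg := hull_line p hinj hcw hij hrrhull hy0
      refine ⟨rr, segment_subset_convexHull (Set.mem_insert _ _)
        (Set.mem_insert_of_mem _ (Set.mem_insert _ _)) hseg, ?_⟩
      have hdiff : p v - rr = s • (p v - q) := by
        rw [hrr, smul_sub, sub_smul, one_smul]
        abel
      rw [dist_eq_norm, dist_eq_norm, hdiff, norm_smul, Real.norm_of_nonneg hs0]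
      nlinarith [norm_nonneg (p v - q)]
  refine le_of_not_gt fun hlt => ?_
  obtain ⟨q, hq, hdq⟩ := (Metric.infDist_lt_iff hS'ne).1 hlt
  obtain ⟨rr, hrrm, hd⟩ := hpoint q hq
  exact lt_irrefl _ (lt_of_le_of_lt ((Metric.infDist_le_dist_of_mem hrrm).trans hd) hdq)
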